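/- arXiv:2405.11666 — 3 statements merged into one kernel-verified Lean document; each statement's English description precedes it below -/
import Mathlib

section
/- Let n ≥ 1 and d ≥ 3 be integers and let f = x_0^d + x_1^d + ⋯ + x_{n+1}^d be the Fermat polynomial in n+2 variables over ℂ. Then Lin(f) consists exactly of the matrices obtained by composing a permutation of the coordinates with multiplication of each coordinate by a d-th root of unity; in particular |Lin(f)| = (n+2)!·d^{n+2}. -/
open MvPolynomial

/-- The linear substitution of variables `x ↦ g · x` applied to a multivariate polynomial. -/
noncomputable def substMat {m : ℕ} (g : Matrix (Fin m) (Fin m) ℂ)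
    (f : MvPolynomial (Fin m) ℂ) : MvPolynomial (Fin m) ℂ :=
  aeval (fun i => ∑ j, g i j • X j) f

/-- `f` is homogeneous of degree `d` and the only common zero of its partial
derivatives is the origin (so `{f = 0}` is a smooth projective hypersurface). -/
def IsSmoothHypersurface {m : ℕ} (d : ℕ) (f : MvPolynomial (Fin m) ℂ) : Prop :=
  f.IsHomogeneous d ∧ ∀ x : Fin m → ℂ, (∀ i, eval x (pderiv i f) = 0) → x = 0

/-- `Lin(f)`: the invertible matrices `g` such that substituting `x ↦ g·x` in `f` gives `f`. -/
def LinSet {m : ℕ} (f : MvPolynomial (Fin m) ℂ) :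
    Set (Matrix.GeneralLinearGroup (Fin m) ℂ) :=
  {g | substMat (g : Matrix (Fin m) (Fin m) ℂ) f = f}

namespace FermatAux

variable {m d : ℕ}

lemma eval_substMat (g : Matrix (Fin m) (Fin m) ℂ) (f : MvPolynomial (Fin m) ℂ)
    (x : Fin m → ℂ) : eval x (substMat g f) = eval (g.mulVec x) f := by
  induction f using MvPolynomial.induction_on with
  | C a => simp [substMat]
  | add p q hp hq => simp only [substMat, map_add] at *; rw [hp, hq]
  | mul_X p i hp =>
      simp only [substMat, map_mul, aeval_X] at *
      rw [hp]
      congr 1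
      simp [smul_eq_C_mul, Matrix.mulVec, dotProduct]

lemma substMat_fermat (g : Matrix (Fin m) (Fin m) ℂ) :
    substMat g (∑ i, X i ^ d) = ∑ i, (∑ j, g i j • X j) ^ d := by
  simp [substMat]

lemma pderiv_linform (g : Matrix (Fin m) (Fin m) ℂ) (i a : Fin m) :
    pderiv a (∑ j, g i j • X j) = C (g i a) := by
  rw [map_sum]
  rw [Finset.sum_eq_single a]
  · rw [Derivation.map_smul, pderiv_X_self, smul_eq_C_mul, mul_one]
  · intro b _ hb
    rw [Derivation.map_smul, pderiv_X_of_ne hb, smul_zero]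
  · simp

lemma deriv_id (hd : 1 ≤ d) (g : Matrix (Fin m) (Fin m) ℂ)
    (hg : substMat g (∑ i, X i ^ d) = ∑ i, X i ^ d) (a : Fin m) :
    ∑ i, g i a • ((∑ j, g i j • X j) ^ (d - 1)) = (X a : MvPolynomial (Fin m) ℂ) ^ (d - 1) := by
  have h := congrArg (pderiv a) hg
  rw [substMat_fermat, map_sum, map_sum] at h
  have hL : ∀ i, pderiv a ((∑ j, g i j • X j) ^ d)
      = (d : MvPolynomial (Fin m) ℂ) * (g i a • ((∑ j, g i j • X j) ^ (d - 1))) := by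
    intro i
    rw [pderiv_pow, pderiv_linform, smul_eq_C_mul]
    ring
  have hX : ∀ i : Fin m, pderiv a ((X i : MvPolynomial (Fin m) ℂ) ^ d)
      = (d : MvPolynomial (Fin m) ℂ) * (if i = a then X a ^ (d - 1) else 0) := by
    intro i
    rw [pderiv_pow]
    by_cases hia : i = a
    · subst hia; rw [pderiv_X_self, if_pos rfl, mul_one]
    · rw [pderiv_X_of_ne hia, if_neg hia, mul_zero, mul_zero]
  simp only [hL, hX] at h
  rw [← Finset.mul_sum, ← Finset.mul_sum, Finset.sum_ite_eq' Finset.univ a] at h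
  simp only [Finset.mem_univ, if_pos] at h
  have hdC : (d : MvPolynomial (Fin m) ℂ) ≠ 0 := by
    have : d ≠ 0 := by omega
    exact_mod_cast this
  exact mul_left_cancel₀ hdC h

lemma inv_id (hd : 1 ≤ d) (g : (Matrix (Fin m) (Fin m) ℂ)ˣ)
    (hg : substMat g.val (∑ i, X i ^ d) = ∑ i, X i ^ d) (i₀ : Fin m) :
    (∑ j, g.val i₀ j • X j) ^ (d - 1)
      = ∑ a, g.inv a i₀ • ((X a : MvPolynomial (Fin m) ℂ) ^ (d - 1)) := by
  symm
  calc ∑ a, g.inv a i₀ • ((X a : MvPolynomial (Fin m) ℂ) ^ (d - 1))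
      = ∑ a, g.inv a i₀ • ∑ i, g.val i a • ((∑ j, g.val i j • X j) ^ (d - 1)) := by
        refine Finset.sum_congr rfl fun a _ => ?_
        rw [deriv_id hd g.val hg a]
    _ = ∑ i, ((g.val * g.inv) i i₀) • ((∑ j, g.val i j • X j) ^ (d - 1)) := by
        simp_rw [Finset.smul_sum, smul_smul]
        rw [Finset.sum_comm]
        refine Finset.sum_congr rfl fun i _ => ?_
        rw [Matrix.mul_apply, Finset.sum_smul]
        refine Finset.sum_congr rfl fun a _ => ?_
        rw [mul_comm]
    _ = (∑ j, g.val i₀ j • X j) ^ (d - 1) := by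
        rw [g.val_inv]
        simp_rw [Matrix.one_apply, ite_smul, one_smul, zero_smul]
        rw [Finset.sum_ite_eq' Finset.univ i₀]
        simp

lemma sum_two {β : Type*} [AddCommMonoid β] (f : Fin m → β) {j k : Fin m} (hjk : j ≠ k)
    (h0 : ∀ l, l ≠ j → l ≠ k → f l = 0) : ∑ l, f l = f j + f k := by
  classical
  rw [← Finset.sum_subset (Finset.subset_univ ({j, k} : Finset (Fin m)))]
  · rw [Finset.sum_pair hjk]
  · intro x _ hx
    simp only [Finset.mem_insert, Finset.mem_singleton] at hx
    push_neg at hx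
    exact h0 x hx.1 hx.2

lemma row_apart (hd : 3 ≤ d) (g : (Matrix (Fin m) (Fin m) ℂ)ˣ)
    (hg : substMat g.val (∑ i, X i ^ d) = ∑ i, X i ^ d) (i : Fin m) {j k : Fin m}
    (hjk : j ≠ k) (hj : g.val i j ≠ 0) : g.val i k = 0 := by
  by_contra hk
  have hinv := inv_id (by omega) g hg i
  set a := g.val i j with ha
  set b := g.val i k with hb
  set c := g.inv j i with hc
  set e := g.inv k i with he
  have key : ∀ w : ℂ, (a * w + b) ^ (d - 1) = c * w ^ (d - 1) + e := by
    intro w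
    have h := congrArg (eval (fun l => if l = j then w else if l = k then 1 else 0)) hinv
    rw [map_pow, map_sum, map_sum] at h
    have hL : (∑ l, eval (fun l => if l = j then w else if l = k then 1 else 0)
        (g.val i l • X l)) = a * w + b := by
      have : ∀ l, eval (fun l => if l = j then w else if l = k then 1 else 0)
          (g.val i l • X l) = g.val i l * (if l = j then w else if l = k then 1 else 0) := by
        intro l
        rw [smul_eq_C_mul, map_mul, eval_C, eval_X]
      simp_rw [this]
      rw [sum_two _ hjk]
      · simp [hjk, hjk.symm, ha, hb]
      · intro l hl1 hl2
        simp [hl1, hl2]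
    have hR : (∑ l, eval (fun l => if l = j then w else if l = k then 1 else 0)
        (g.inv l i • (X l : MvPolynomial (Fin m) ℂ) ^ (d - 1))) = c * w ^ (d - 1) + e := by
      have : ∀ l, eval (fun l => if l = j then w else if l = k then 1 else 0)
          (g.inv l i • (X l : MvPolynomial (Fin m) ℂ) ^ (d - 1))
          = g.inv l i * (if l = j then w else if l = k then 1 else 0) ^ (d - 1) := by
        intro l
        rw [smul_eq_C_mul, map_mul, eval_C, map_pow, eval_X]
      simp_rw [this]
      rw [sum_two _ hjk]
      · have e1 : (if j = j then w else if j = k then (1:ℂ) else 0) = w := if_pos rfl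
        have e2 : (if k = j then w else if k = k then (1:ℂ) else 0) = 1 := by
          rw [if_neg (Ne.symm hjk), if_pos rfl]
        rw [e1, e2, one_pow, mul_one]
      · intro l hl1 hl2
        simp only [if_neg hl1, if_neg hl2]
        rw [zero_pow (by omega), mul_zero]
    rw [hL, hR] at h
    exact h
  have hane : a ≠ 0 := hj
  have hbne : b ≠ 0 := hk
  set ζ : ℂ := Complex.exp (2 * Real.pi * Complex.I / (d - 1 : ℕ)) with hζdef
  have hζ : IsPrimitiveRoot ζ (d - 1) := Complex.isPrimitiveRoot_exp (d - 1) (by omega)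
  have hζ1 : ζ ≠ 1 := hζ.ne_one (by omega)
  have hzero : a * (-b / a) + b = 0 := by field_simp; ring
  have h1 : c * (-b / a) ^ (d - 1) + e = 0 := by
    rw [← key (-b / a), hzero, zero_pow (by omega : d - 1 ≠ 0)]
  have h2 : (a * (-b / a * ζ) + b) ^ (d - 1) = 0 := by
    rw [key (-b / a * ζ), mul_pow, hζ.pow_eq_one, mul_one, h1]
  have h3 : a * (-b / a * ζ) + b = b * (1 - ζ) := by
    field_simp
    ring
  rw [h3] at h2
  have : b * (1 - ζ) ≠ 0 := mul_ne_zero hbne (sub_ne_zero.mpr (Ne.symm hζ1))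
  exact this (pow_eq_zero_iff (by omega : d - 1 ≠ 0) |>.mp h2)

lemma col_existsUnique (hd : 3 ≤ d) (g : (Matrix (Fin m) (Fin m) ℂ)ˣ)
    (hg : substMat g.val (∑ i, X i ^ d) = ∑ i, X i ^ d) (j : Fin m) :
    ∃! i, g.val i j ≠ 0 := by
  have hex : ∃ i, g.val i j ≠ 0 := by
    by_contra h
    push_neg at h
    have h1 := congrFun (congrFun g.inv_val j) j
    rw [Matrix.mul_apply, Matrix.one_apply_eq] at h1
    simp only [h, mul_zero, Finset.sum_const_zero] at h1
    exact zero_ne_one h1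
  obtain ⟨i, hi⟩ := hex
  refine ⟨i, hi, fun i' hi' => ?_⟩
  by_contra hne
  have hrow : ∀ k, k ≠ j → g.val i k = 0 := fun k hk =>
    row_apart hd g hg i (Ne.symm hk) hi
  have hrow' : ∀ k, k ≠ j → g.val i' k = 0 := fun k hk =>
    row_apart hd g hg i' (Ne.symm hk) hi'
  have e1 : g.val i' j * g.inv j i = 0 := by
    have h1 := congrFun (congrFun g.val_inv i') i
    rw [Matrix.mul_apply, Matrix.one_apply_ne hne] at h1
    rw [← h1]
    symm
    apply Finset.sum_eq_single j
    · intro b _ hb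
      rw [hrow' b hb, zero_mul]
    · simp
  have hinvji : g.inv j i = 0 := by
    rcases mul_eq_zero.mp e1 with h | h
    · exact absurd h hi'
    · exact h
  have e2 : (1 : ℂ) = g.val i j * g.inv j i := by
    have h1 := congrFun (congrFun g.val_inv i) i
    rw [Matrix.mul_apply, Matrix.one_apply_eq] at h1
    rw [← h1]
    apply Finset.sum_eq_single j
    · intro b _ hb
      rw [hrow b hb, zero_mul]
    · simp
  rw [hinvji, mul_zero] at e2
  exact one_ne_zero e2

lemma structure_of_mem (hd : 3 ≤ d) (g : (Matrix (Fin m) (Fin m) ℂ)ˣ)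
    (hg : substMat g.val (∑ i, X i ^ d) = ∑ i, X i ^ d) :
    ∃ (σ : Equiv.Perm (Fin m)) (u : Fin m → ℂ), (∀ j, u j ^ d = 1) ∧
      g.val = Matrix.of fun i j => if i = σ j then u j else 0 := by
  have hcol := fun j => col_existsUnique hd g hg j
  choose σ₀ hσ₀ hσ₀u using hcol
  have hinj : Function.Injective σ₀ := by
    intro j k hjk2
    by_contra hne
    exact hσ₀ k (hjk2 ▸ row_apart hd g hg (σ₀ j) hne (hσ₀ j))
  let σ : Equiv.Perm (Fin m) := Equiv.ofBijective σ₀ (Finite.injective_iff_bijective.mp hinj)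
  refine ⟨σ, fun j => g.val (σ₀ j) j, ?_, ?_⟩
  · intro j
    have h : eval (g.val.mulVec (Pi.single j 1)) (∑ i, (X i : MvPolynomial (Fin m) ℂ) ^ d)
        = eval (Pi.single j 1) (∑ i, (X i : MvPolynomial (Fin m) ℂ) ^ d) := by
      rw [← eval_substMat, hg]
    rw [Matrix.mulVec_single_one] at h
    simp only [map_sum, map_pow, eval_X, mul_one, Matrix.col_apply] at h
    rw [Finset.sum_eq_single (σ₀ j), Finset.sum_eq_single j] at h
    · rw [h, Pi.single_eq_same, one_pow]
    · intro b _ hb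
      rw [Pi.single_eq_of_ne hb, zero_pow (by omega : d ≠ 0)]
    · simp
    · intro b _ hb
      have : g.val b j = 0 := by
        by_contra h0
        exact hb (hσ₀u j b h0)
      rw [this, zero_pow (by omega : d ≠ 0)]
    · simp
  · ext i j
    rw [Matrix.of_apply]
    have hσj : σ j = σ₀ j := rfl
    by_cases hij : i = σ₀ j
    · rw [if_pos (hσj ▸ hij), hij]
    · rw [if_neg (fun hc => hij (hσj ▸ hc))]
      by_contra h0
      exact hij (hσ₀u j i h0)

lemma mem_of_perm (hd1 : 1 ≤ d) (σ : Equiv.Perm (Fin m)) (u : Fin m → ℂ)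
    (hu : ∀ j, u j ^ d = 1) (g : Matrix (Fin m) (Fin m) ℂ)
    (hgm : g = Matrix.of fun i j => if i = σ j then u j else 0) :
    substMat g (∑ i, X i ^ d) = ∑ i, X i ^ d := by
  subst hgm
  rw [substMat_fermat]
  have hrow : ∀ i, (∑ j, (Matrix.of fun i j => if i = σ j then u j else 0) i j
      • (X j : MvPolynomial (Fin m) ℂ)) = u (σ.symm i) • X (σ.symm i) := by
    intro i
    rw [Finset.sum_eq_single (σ.symm i)]
    · rw [Matrix.of_apply, if_pos (by simp)]
    · intro b _ hb
      rw [Matrix.of_apply, if_neg, zero_smul]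
      intro hcon
      exact hb (by rw [hcon, Equiv.symm_apply_apply])
    · simp
  simp_rw [hrow, smul_pow, hu, one_smul]
  exact Equiv.sum_comp σ.symm (fun i => (X i : MvPolynomial (Fin m) ℂ) ^ d)

/-- The generalized permutation matrix as a unit. -/
noncomputable def permUnit (σ : Equiv.Perm (Fin m)) (u : Fin m → ℂ) (hu : ∀ j, u j ≠ 0) :
    (Matrix (Fin m) (Fin m) ℂ)ˣ where
  val := Matrix.of fun i j => if i = σ j then u j else 0
  inv := Matrix.of fun j i => if i = σ j then (u j)⁻¹ else 0
  val_inv := by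
    ext i i'
    rw [Matrix.mul_apply, Finset.sum_eq_single (σ.symm i)]
    · rw [Matrix.of_apply, Matrix.of_apply, if_pos (by simp)]
      by_cases h : i = i'
      · subst h
        rw [if_pos (by simp), Matrix.one_apply_eq, mul_inv_cancel₀ (hu _)]
      · rw [if_neg (by simp [Ne.symm h]), Matrix.one_apply_ne h, mul_zero]
    · intro b _ hb
      rw [Matrix.of_apply, if_neg (fun hc => hb (by rw [hc, Equiv.symm_apply_apply])), zero_mul]
    · simp
  inv_val := by
    ext j j'
    rw [Matrix.mul_apply, Finset.sum_eq_single (σ j)]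
    · rw [Matrix.of_apply, Matrix.of_apply, if_pos rfl]
      by_cases h : j = j'
      · subst h
        rw [if_pos rfl, Matrix.one_apply_eq, inv_mul_cancel₀ (hu _)]
      · rw [if_neg (fun hc => h (σ.injective hc)), Matrix.one_apply_ne h, mul_zero]
    · intro b _ hb
      rw [Matrix.of_apply, if_neg hb, zero_mul]
    · simp

end FermatAux

theorem stmt_11 (n d : ℕ) (hn : 1 ≤ n) (hd : 3 ≤ d) :
    LinSet (∑ i, X i ^ d : MvPolynomial (Fin (n+2)) ℂ) =
      {g : Matrix.GeneralLinearGroup (Fin (n+2)) ℂ |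
        ∃ (σ : Equiv.Perm (Fin (n+2))) (u : Fin (n+2) → ℂ),
          (∀ j, u j ^ d = 1) ∧
            (g : Matrix (Fin (n+2)) (Fin (n+2)) ℂ)
              = Matrix.of fun i j => if i = σ j then u j else 0} ∧
    Nat.card (LinSet (∑ i, X i ^ d : MvPolynomial (Fin (n+2)) ℂ))
      = Nat.factorial (n+2) * d ^ (n+2) := by
  have hd1 : 1 ≤ d := by omega
  have hd0 : d ≠ 0 := by omega
  have hset : LinSet (∑ i, X i ^ d : MvPolynomial (Fin (n+2)) ℂ) =
      {g : Matrix.GeneralLinearGroup (Fin (n+2)) ℂ |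
        ∃ (σ : Equiv.Perm (Fin (n+2))) (u : Fin (n+2) → ℂ),
          (∀ j, u j ^ d = 1) ∧
            (g : Matrix (Fin (n+2)) (Fin (n+2)) ℂ)
              = Matrix.of fun i j => if i = σ j then u j else 0} := by
    ext g
    simp only [LinSet, Set.mem_setOf_eq]
    constructor
    · intro hg
      exact FermatAux.structure_of_mem hd g hg
    · rintro ⟨σ, u, hu, hM⟩
      exact FermatAux.mem_of_perm hd1 σ u hu _ hM
  refine ⟨hset, ?_⟩
  rw [hset]
  have hz : ∀ (u : {z : ℂ // z ^ d = 1}), (u : ℂ) ≠ 0 := by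
    rintro ⟨z, hz⟩ h0
    simp only at h0
    rw [h0, zero_pow hd0] at hz
    exact zero_ne_one hz
  have e : (Equiv.Perm (Fin (n+2)) × (Fin (n+2) → {z : ℂ // z ^ d = 1})) ≃
      {g : Matrix.GeneralLinearGroup (Fin (n+2)) ℂ |
        ∃ (σ : Equiv.Perm (Fin (n+2))) (u : Fin (n+2) → ℂ),
          (∀ j, u j ^ d = 1) ∧
            (g : Matrix (Fin (n+2)) (Fin (n+2)) ℂ)
              = Matrix.of fun i j => if i = σ j then u j else 0} := by
    refine Equiv.ofBijective
      (fun p => ⟨FermatAux.permUnit p.1 (fun j => (p.2 j : ℂ)) (fun j => hz (p.2 j)),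
        p.1, fun j => (p.2 j : ℂ), fun j => (p.2 j).2, rfl⟩) ⟨?_, ?_⟩
    · intro p q hpq
      have hM := congrArg (fun x => ((x : {g // _}) : Matrix.GeneralLinearGroup (Fin (n+2)) ℂ).val) hpq
      simp only [FermatAux.permUnit] at hM
      have key : ∀ j, p.1 j = q.1 j ∧ (p.2 j : ℂ) = (q.2 j : ℂ) := by
        intro j
        have h := congrFun (congrFun hM (p.1 j)) j
        rw [Matrix.of_apply, Matrix.of_apply, if_pos rfl] at h
        by_cases hc : p.1 j = q.1 j
        · rw [if_pos hc] at h
          exact ⟨hc, h⟩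
        · rw [if_neg hc] at h
          exact absurd h (hz (p.2 j))
      ext j
      · exact congrArg Fin.val (key j).1
      · exact (key j).2
    · rintro ⟨g, σ, u, hu, hM⟩
      refine ⟨⟨σ, fun j => ⟨u j, hu j⟩⟩, ?_⟩
      apply Subtype.ext
      apply Units.ext
      exact hM.symm
  rw [← Nat.card_congr e, Nat.card_prod, Nat.card_fun]
  have hroots : Nat.card {z : ℂ // z ^ d = 1} = d := by
    have e2 : {z : ℂ // z ^ d = 1} ≃ (Polynomial.nthRootsFinset d (1 : ℂ) : Finset ℂ) :=
      Equiv.subtypeEquivRight fun z =>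
        (Polynomial.mem_nthRootsFinset (Nat.pos_of_ne_zero hd0) 1).symm
    rw [Nat.card_congr e2, Nat.card_eq_fintype_card, Fintype.card_coe,
      (Complex.isPrimitiveRoot_exp d hd0).card_nthRootsFinset]
  rw [hroots, Nat.card_eq_fintype_card, Fintype.card_perm, Fintype.card_fin,
    Nat.card_eq_fintype_card, Fintype.card_fin]
end

section
/- Fix integers N ≥ 27 and d ≥ 3. Then for every partition π of N other than (1^N) (the multiset consisting of N ones), B(π,d) < B((1^N),d) = N!·d^N. -/
/-- Collins' bound `Ξ(N)`: the maximal value of `[G : Z(G)]` over primitive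
subgroups `G ⊆ GL_N(ℂ)`. -/
def Xi : ℕ → ℕ
  | 1 => 1
  | 2 => 60
  | 3 => 360
  | 4 => 25920
  | 5 => 25920
  | 6 => 6531840
  | 7 => 1451520
  | 8 => 348364800
  | 9 => 4199040
  | 12 => 448345497600
  | N => Nat.factorial (N + 1)

/-- The bound `B(π,d)` associated to a partition `π` (a multiset of block sizes)
and a degree `d`:  `B(π,d) = (∏_k μ_k!) · (∏_{blocks i} Ξ(i)) · d^r`. -/
def Bpart (π : Multiset ℕ) (d : ℕ) : ℕ :=
  (π.toFinset.prod fun k => Nat.factorial (π.count k)) *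
    (π.map Xi).prod * d ^ Multiset.card π


def Atab : ℕ → ℕ
  | 0 => 320
  | 1 => 214
  | 2 => 3200
  | 3 => 2134
  | 4 => 12800
  | 5 => 5335
  | 6 => 25600
  | 7 => 8892
  | 8 => 36572
  | 9 => 11115
  | 10 => 40636
  | 11 => 11115
  | 12 => 36942
  | 13 => 9263
  | 14 => 28417
  | 15 => 6617
  | 16 => 18945
  | 17 => 4136
  | 18 => 11145
  | 19 => 2298
  | 20 => 5866
  | 21 => 1149
  | 22 => 2794
  | 23 => 523
  | 24 => 1215
  | 25 => 218
  | 26 => 486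
  | 27 => 84
  | _ => 190

lemma Atab_tail (n : ℕ) : Atab (n + 28) = 190 := rfl

lemma Xi_ge13 (n : ℕ) : Xi (n + 13) = Nat.factorial (n + 14) := rfl

lemma Atab_ge (s : ℕ) : 84 ≤ Atab s := by
  rcases Nat.lt_or_ge s 28 with h | h
  · exact (by decide : ∀ s' < 28, 84 ≤ Atab s') s h
  · obtain ⟨n, rfl⟩ := Nat.exists_eq_add_of_le h
    rw [Nat.add_comm, Atab_tail]; norm_num

lemma Atab_le (s : ℕ) : Atab s ≤ 40636 := by
  rcases Nat.lt_or_ge s 28 with h | h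
  · exact (by decide : ∀ s' < 28, Atab s' ≤ 40636) s h
  · obtain ⟨n, rfl⟩ := Nat.exists_eq_add_of_le h
    rw [Nat.add_comm, Atab_tail]; norm_num

lemma Atab_base (s : ℕ) : 640 ≤ (s + 2) * Atab s := by
  rcases Nat.lt_or_ge s 28 with h | h
  · exact (by decide : ∀ s' < 28, 640 ≤ (s' + 2) * Atab s') s h
  · obtain ⟨n, rfl⟩ := Nat.exists_eq_add_of_le h
    have h190 : Atab (28 + n) = 190 := by rw [Nat.add_comm, Atab_tail]
    rw [h190]
    have : 30 * 190 ≤ (28 + n + 2) * 190 := Nat.mul_le_mul_right _ (by omega)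
    omega

lemma Atab_final (N : ℕ) (h : 27 ≤ N) : Atab N ≤ 190 := by
  rcases Nat.lt_or_ge N 28 with h' | h'
  · have : N = 27 := by omega
    subst this; decide
  · obtain ⟨n, rfl⟩ := Nat.exists_eq_add_of_le h'
    rw [Nat.add_comm, Atab_tail]

/-- `(s+1)(s+2) * (j+2)! * s! ≤ 2 * (s+j+2)!` -/
lemma fact_prod_le (s : ℕ) : ∀ j : ℕ,
    (s + 1) * (s + 2) * Nat.factorial (j + 2) * Nat.factorial s
      ≤ 2 * Nat.factorial (s + (j + 2)) := by
  intro j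
  induction j with
  | zero =>
      have h2 : Nat.factorial (s + 2) = (s + 2) * ((s + 1) * Nat.factorial s) := by
        rw [Nat.factorial_succ, Nat.factorial_succ]
      have : Nat.factorial (0 + 2) = 2 := by decide
      rw [this, h2]; ring_nf; exact le_refl _
  | succ j ih =>
      have e1 : Nat.factorial (j + 1 + 2) = (j + 3) * Nat.factorial (j + 2) := by
        rw [show j + 1 + 2 = (j + 2) + 1 from by ring, Nat.factorial_succ]
      have e2 : Nat.factorial (s + (j + 1 + 2)) = (s + j + 3) * Nat.factorial (s + (j + 2)) := by
        rw [show s + (j + 1 + 2) = (s + (j + 2)) + 1 from by ring, Nat.factorial_succ]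
        ring
      calc (s + 1) * (s + 2) * Nat.factorial (j + 1 + 2) * Nat.factorial s
          = (j + 3) * ((s + 1) * (s + 2) * Nat.factorial (j + 2) * Nat.factorial s) := by
            rw [e1]; ring
        _ ≤ (j + 3) * (2 * Nat.factorial (s + (j + 2))) := Nat.mul_le_mul_left _ ih
        _ ≤ (s + j + 3) * (2 * Nat.factorial (s + (j + 2))) := by
            apply Nat.mul_le_mul_right; omega
        _ = 2 * Nat.factorial (s + (j + 1 + 2)) := by rw [e2]; ring

/-- `(s+2) * 29^(j+1) * s! ≤ (s+j+2)!` for `s ≥ 28` -/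
lemma asc29 (s : ℕ) (hs : 28 ≤ s) : ∀ j : ℕ,
    (s + 2) * 29 ^ (j + 1) * Nat.factorial s ≤ Nat.factorial (s + (j + 2)) := by
  intro j
  induction j with
  | zero =>
      have h2 : Nat.factorial (s + (0 + 2)) = (s + 2) * ((s + 1) * Nat.factorial s) := by
        rw [show s + (0 + 2) = s + 1 + 1 from by ring, Nat.factorial_succ, Nat.factorial_succ]
      rw [h2, pow_one]
      calc (s + 2) * 29 * Nat.factorial s ≤ (s + 2) * ((s + 1) * Nat.factorial s) := by
            rw [mul_assoc]
            apply Nat.mul_le_mul_left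
            apply Nat.mul_le_mul_right
            omega
  | succ j ih =>
      have e2 : Nat.factorial (s + (j + 1 + 2)) = (s + j + 3) * Nat.factorial (s + (j + 2)) := by
        rw [show s + (j + 1 + 2) = (s + (j + 2)) + 1 from by ring, Nat.factorial_succ]
        ring
      calc (s + 2) * 29 ^ (j + 1 + 1) * Nat.factorial s
          = 29 * ((s + 2) * 29 ^ (j + 1) * Nat.factorial s) := by ring
        _ ≤ 29 * Nat.factorial (s + (j + 2)) := Nat.mul_le_mul_left _ ih
        _ ≤ (s + j + 3) * Nat.factorial (s + (j + 2)) := by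
            apply Nat.mul_le_mul_right; omega
        _ = Nat.factorial (s + (j + 1 + 2)) := by rw [e2]

lemma growth (k : ℕ) : 121908 * (k + 14) ≤ 84 * 3 ^ (k + 13) := by
  induction k with
  | zero => norm_num
  | succ k ih =>
      have : 84 * 3 ^ (k + 1 + 13) = 3 * (84 * 3 ^ (k + 13)) := by
        rw [show k + 1 + 13 = (k + 13) + 1 from by ring, pow_succ]; ring
      rw [this]
      calc 121908 * (k + 1 + 14) ≤ 3 * (121908 * (k + 14)) := by ring_nf; omega
        _ ≤ 3 * (84 * 3 ^ (k + 13)) := Nat.mul_le_mul_left _ ih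

/-- The master inequality. -/
lemma master (s i : ℕ) (hi : 2 ≤ i) :
    (s + 2) * Atab s * Xi i * Nat.factorial s * 3
      ≤ 2 * Atab (s + i) * Nat.factorial (s + i) * 3 ^ i := by
  rcases Nat.lt_or_ge i 13 with h13 | h13
  · rcases Nat.lt_or_ge s 28 with h28 | h28
    · exact (by decide : ∀ s' < 28, ∀ i' < 13, 2 ≤ i' →
        (s' + 2) * Atab s' * Xi i' * Nat.factorial s' * 3
          ≤ 2 * Atab (s' + i') * Nat.factorial (s' + i') * 3 ^ i') s h28 i h13 hi
    · -- s ≥ 28, 2 ≤ i ≤ 12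
      obtain ⟨j, rfl⟩ := Nat.exists_eq_add_of_le hi
      have hj : j < 11 := by omega
      have hXi : Xi (j + 2) ≤ 2 * 87 ^ (j + 1) :=
        (by decide : ∀ j' < 11, Xi (j' + 2) ≤ 2 * 87 ^ (j' + 1)) j hj
      rw [show 2 + j = j + 2 from by ring]
      have hA1 : Atab s = 190 := by
        obtain ⟨n, rfl⟩ := Nat.exists_eq_add_of_le h28
        rw [Nat.add_comm, Atab_tail]
      have hA2 : Atab (s + (j + 2)) = 190 := by
        obtain ⟨n, rfl⟩ := Nat.exists_eq_add_of_le h28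
        rw [show 28 + n + (j + 2) = (n + j + 2) + 28 from by ring, Atab_tail]
      rw [hA1, hA2]
      have h6 : Xi (j + 2) * 3 ≤ 2 * 3 ^ (j + 2) * 29 ^ (j + 1) := by
        calc Xi (j + 2) * 3 ≤ 2 * 87 ^ (j + 1) * 3 :=
              Nat.mul_le_mul_right _ hXi
          _ = 2 * 3 ^ (j + 2) * 29 ^ (j + 1) := by
              rw [show (87:ℕ) = 3 * 29 from rfl, mul_pow]; ring
      calc (s + 2) * 190 * Xi (j + 2) * Nat.factorial s * 3
          = (Xi (j + 2) * 3) * ((s + 2) * 190 * Nat.factorial s) := by ring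
        _ ≤ (2 * 3 ^ (j + 2) * 29 ^ (j + 1)) * ((s + 2) * 190 * Nat.factorial s) :=
            Nat.mul_le_mul_right _ h6
        _ = (2 * 190 * 3 ^ (j + 2)) * ((s + 2) * 29 ^ (j + 1) * Nat.factorial s) := by ring
        _ ≤ (2 * 190 * 3 ^ (j + 2)) * Nat.factorial (s + (j + 2)) :=
            Nat.mul_le_mul_left _ (asc29 s h28 j)
        _ = 2 * 190 * Nat.factorial (s + (j + 2)) * 3 ^ (j + 2) := by ring
  · -- i ≥ 13
    obtain ⟨k, rfl⟩ := Nat.exists_eq_add_of_le h13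
    rw [show 13 + k = k + 13 from by ring, Xi_ge13]
    have hfact : Nat.factorial (k + 14) = (k + 14) * Nat.factorial (k + 13) := by
      rw [show k + 14 = (k + 13) + 1 from by ring, Nat.factorial_succ]
    have hF1 := fact_prod_le s (k + 11)
    rw [show k + 11 + 2 = k + 13 from by ring] at hF1
    have hgrow := growth k
    calc (s + 2) * Atab s * Nat.factorial (k + 14) * Nat.factorial s * 3
        ≤ (s + 2) * 40636 * Nat.factorial (k + 14) * Nat.factorial s * 3 := by
          apply Nat.mul_le_mul_right
          apply Nat.mul_le_mul_right
          apply Nat.mul_le_mul_right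
          exact Nat.mul_le_mul_left _ (Atab_le s)
      _ = (121908 * (k + 14)) * ((s + 2) * Nat.factorial (k + 13) * Nat.factorial s) := by
          rw [hfact]; ring
      _ ≤ (84 * 3 ^ (k + 13)) * ((s + 2) * Nat.factorial (k + 13) * Nat.factorial s) :=
          Nat.mul_le_mul_right _ hgrow
      _ ≤ (84 * 3 ^ (k + 13)) * ((s + 1) * (s + 2) * Nat.factorial (k + 13) * Nat.factorial s) := by
          apply Nat.mul_le_mul_left
          have : (s + 2) * Nat.factorial (k + 13) * Nat.factorial s
              ≤ (s + 1) * ((s + 2) * Nat.factorial (k + 13) * Nat.factorial s) :=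
            Nat.le_mul_of_pos_left _ (by omega)
          calc (s + 2) * Nat.factorial (k + 13) * Nat.factorial s
              ≤ (s + 1) * ((s + 2) * Nat.factorial (k + 13) * Nat.factorial s) := this
            _ = (s + 1) * (s + 2) * Nat.factorial (k + 13) * Nat.factorial s := by ring
      _ ≤ (84 * 3 ^ (k + 13)) * (2 * Nat.factorial (s + (k + 13))) := by
          apply Nat.mul_le_mul_left
          have := fact_prod_le s (k + 11)
          rw [show k + 11 + 2 = k + 13 from by ring] at this
          exact this
      _ = 2 * 84 * Nat.factorial (s + (k + 13)) * 3 ^ (k + 13) := by ring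
      _ ≤ 2 * Atab (s + (k + 13)) * Nat.factorial (s + (k + 13)) * 3 ^ (k + 13) := by
          apply Nat.mul_le_mul_right
          apply Nat.mul_le_mul_right
          exact Nat.mul_le_mul_left _ (Atab_ge _)

lemma key_step (s i c : ℕ) (hi : 2 ≤ i) (hc : 2 * c ≤ s + 2) :
    c * Atab s * Xi i * Nat.factorial s * 3
      ≤ Atab (s + i) * Nat.factorial (s + i) * 3 ^ i := by
  have hm := master s i hi
  have h2 : 2 * (c * Atab s * Xi i * Nat.factorial s * 3)
      ≤ 2 * (Atab (s + i) * Nat.factorial (s + i) * 3 ^ i) := by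
    calc 2 * (c * Atab s * Xi i * Nat.factorial s * 3)
        = (2 * c) * (Atab s * Xi i * Nat.factorial s * 3) := by ring
      _ ≤ (s + 2) * (Atab s * Xi i * Nat.factorial s * 3) := Nat.mul_le_mul_right _ hc
      _ = (s + 2) * Atab s * Xi i * Nat.factorial s * 3 := by ring
      _ ≤ 2 * Atab (s + i) * Nat.factorial (s + i) * 3 ^ i := hm
      _ = 2 * (Atab (s + i) * Nat.factorial (s + i) * 3 ^ i) := by ring
  omega

lemma key_base (u i : ℕ) (hi : 2 ≤ i) :
    320 * Xi i * Nat.factorial u * 3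
      ≤ Atab (u + i) * Nat.factorial (u + i) * 3 ^ i := by
  have hm := master u i hi
  have hb := Atab_base u
  have h2 : 2 * (320 * Xi i * Nat.factorial u * 3)
      ≤ 2 * (Atab (u + i) * Nat.factorial (u + i) * 3 ^ i) := by
    calc 2 * (320 * Xi i * Nat.factorial u * 3)
        = 640 * (Xi i * Nat.factorial u * 3) := by ring
      _ ≤ ((u + 2) * Atab u) * (Xi i * Nat.factorial u * 3) := Nat.mul_le_mul_right _ hb
      _ = (u + 2) * Atab u * Xi i * Nat.factorial u * 3 := by ring
      _ ≤ 2 * Atab (u + i) * Nat.factorial (u + i) * 3 ^ i := hm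
      _ = 2 * (Atab (u + i) * Nat.factorial (u + i) * 3 ^ i) := by ring
  omega

/-- Core induction: for a nonempty multiset of blocks all `≥ 2`. -/
lemma core (σ : Multiset ℕ) :
    σ ≠ 0 → (∀ x ∈ σ, 2 ≤ x) → ∀ u : ℕ,
    320 * Nat.factorial (Multiset.card σ) * ((σ.map Xi).prod) * 3 ^ (Multiset.card σ)
        * Nat.factorial u
      ≤ Atab (u + σ.sum) * Nat.factorial (u + σ.sum) * 3 ^ σ.sum := by
  induction σ using Multiset.induction_on with
  | empty => intro h; exact absurd rfl h
  | cons i τ ih =>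
    intro _ h2 u
    have hi : 2 ≤ i := h2 i (Multiset.mem_cons_self i τ)
    by_cases hτ : τ = 0
    · subst hτ
      simp only [Multiset.card_cons, Multiset.card_zero, Multiset.map_cons, Multiset.map_zero,
        Multiset.prod_cons, Multiset.prod_zero, Multiset.sum_cons, Multiset.sum_zero]
      have hb := key_base u i hi
      calc 320 * Nat.factorial (0 + 1) * (Xi i * 1) * 3 ^ (0 + 1) * Nat.factorial u
          = 320 * Xi i * Nat.factorial u * 3 := by
            simp [Nat.factorial]; ring
        _ ≤ Atab (u + i) * Nat.factorial (u + i) * 3 ^ i := hb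
        _ = Atab (u + (i + 0)) * Nat.factorial (u + (i + 0)) * 3 ^ (i + 0) := by
            norm_num
    · have h2τ : ∀ x ∈ τ, 2 ≤ x := fun x hx => h2 x (Multiset.mem_cons_of_mem hx)
      have IH := ih hτ h2τ u
      set m := Multiset.card τ with hm
      set S := τ.sum with hS
      have hmS : 2 * m ≤ S := by
        have := Multiset.card_nsmul_le_sum h2τ
        simpa [smul_eq_mul, mul_comm] using this
      have hc : 2 * (m + 1) ≤ (u + S) + 2 := by omega
      have hk := key_step (u + S) i (m + 1) hi hc
      have hcard : Multiset.card (i ::ₘ τ) = m + 1 := by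
        simp [Multiset.card_cons, hm]
      have hsum : (i ::ₘ τ).sum = i + S := by
        simp [Multiset.sum_cons, hS]
      have hprod : ((i ::ₘ τ).map Xi).prod = Xi i * (τ.map Xi).prod := by
        simp [Multiset.map_cons, Multiset.prod_cons]
      rw [hcard, hsum, hprod]
      have hfact1 : Nat.factorial (m + 1) = (m + 1) * Nat.factorial m := Nat.factorial_succ m
      calc 320 * Nat.factorial (m + 1) * (Xi i * (τ.map Xi).prod) * 3 ^ (m + 1)
            * Nat.factorial u
          = ((m + 1) * Xi i * 3) *
              (320 * Nat.factorial m * (τ.map Xi).prod * 3 ^ m * Nat.factorial u) := by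
            rw [hfact1]; ring
        _ ≤ ((m + 1) * Xi i * 3) *
              (Atab (u + S) * Nat.factorial (u + S) * 3 ^ S) :=
            Nat.mul_le_mul_left _ IH
        _ = ((m + 1) * Atab (u + S) * Xi i * Nat.factorial (u + S) * 3) * 3 ^ S := by ring
        _ ≤ (Atab (u + S + i) * Nat.factorial (u + S + i) * 3 ^ i) * 3 ^ S :=
            Nat.mul_le_mul_right _ hk
        _ = Atab (u + (i + S)) * Nat.factorial (u + (i + S)) * 3 ^ (i + S) := by
            rw [show u + S + i = u + (i + S) from by ring, pow_add]; ring

lemma pow_swap (d m S : ℕ) (hd : 3 ≤ d) (h : m ≤ S) :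
    3 ^ S * d ^ m ≤ 3 ^ m * d ^ S := by
  obtain ⟨k, rfl⟩ := Nat.exists_eq_add_of_le h
  rw [pow_add, pow_add]
  calc 3 ^ m * 3 ^ k * d ^ m = 3 ^ k * (3 ^ m * d ^ m) := by ring
    _ ≤ d ^ k * (3 ^ m * d ^ m) :=
        Nat.mul_le_mul_right _ (Nat.pow_le_pow_left hd k)
    _ = 3 ^ m * (d ^ m * d ^ k) := by ring


theorem stmt_18 (N d : ℕ) (hN : 27 ≤ N) (hd : 3 ≤ d) (π : Multiset ℕ)
    (hpos : ∀ x ∈ π, 0 < x) (hsum : π.sum = N)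
    (hne : π ≠ Multiset.replicate N 1) :
    Bpart π d < Bpart (Multiset.replicate N 1) d ∧
    Bpart (Multiset.replicate N 1) d = Nat.factorial N * d ^ N := by
  have hN0 : N ≠ 0 := by omega
  have hrep : Bpart (Multiset.replicate N 1) d = Nat.factorial N * d ^ N := by
    unfold Bpart
    rw [Multiset.toFinset_replicate, if_neg hN0, Finset.prod_singleton,
      Multiset.count_replicate_self, Multiset.map_replicate, Multiset.prod_replicate,
      Multiset.card_replicate]
    norm_num [Xi]
  refine ⟨?_, hrep⟩
  classical
  set σ := π.filter (fun x => 2 ≤ x) with hσdef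
  set ρ := π.filter (fun x => ¬ 2 ≤ x) with hρdef
  have hπ : σ + ρ = π := Multiset.filter_add_not _ π
  set q := Multiset.card ρ with hqdef
  set m := Multiset.card σ with hmdef
  set S := σ.sum with hSdef
  have hσ2 : ∀ x ∈ σ, 2 ≤ x := fun x hx => (Multiset.mem_filter.mp hx).2
  have hρ : ρ = Multiset.replicate q 1 := by
    rw [hqdef]
    apply Multiset.eq_replicate_card.mpr
    intro b hb
    have h1 := (Multiset.mem_filter.mp hb).2
    have h2 := hpos b (Multiset.mem_filter.mp hb).1
    omega
  have hρsum : ρ.sum = q := by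
    rw [hρ, Multiset.sum_replicate, smul_eq_mul, mul_one]
  have hNsum : S + q = N := by
    rw [← hsum, ← hπ, Multiset.sum_add, hρsum]
  have hσne : σ ≠ 0 := by
    intro h0
    apply hne
    have hS0 : S = 0 := by rw [hSdef, h0]; rfl
    have hqN : q = N := by omega
    rw [← hπ, h0, zero_add, hρ, hqN]
  -- bound on the product of factorials of multiplicities
  have hprodσ : (σ.toFinset.prod fun k => Nat.factorial (σ.count k)) ≤ Nat.factorial m := by
    apply Nat.le_of_dvd (Nat.factorial_pos m)
    have h := Nat.prod_factorial_dvd_factorial_sum σ.toFinset (fun k => σ.count k)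
    rwa [Multiset.toFinset_sum_count_eq] at h
  have h1σ : (1:ℕ) ∉ σ.toFinset := by
    intro h
    have := hσ2 1 (Multiset.mem_toFinset.mp h); omega
  have hcountσ : ∀ k ∈ σ.toFinset, π.count k = σ.count k := by
    intro k hk
    have hk2 : 2 ≤ k := hσ2 k (Multiset.mem_toFinset.mp hk)
    rw [← hπ, Multiset.count_add, hρ, Multiset.count_replicate]
    have : ¬ ((1:ℕ) = k) := by omega
    simp [this]
  have hprodbound : (π.toFinset.prod fun k => Nat.factorial (π.count k))
      ≤ Nat.factorial q * Nat.factorial m := by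
    by_cases hq : q = 0
    · have hρ0 : ρ = 0 := by rw [hρ, hq]; rfl
      have hπσ : π = σ := by rw [← hπ, hρ0, add_zero]
      rw [hπσ, hq]
      simpa [Nat.factorial] using hprodσ
    · have htf : π.toFinset = insert 1 σ.toFinset := by
        rw [← hπ, Multiset.toFinset_add, hρ, Multiset.toFinset_replicate, if_neg hq,
          Finset.union_comm]
        exact (Finset.insert_eq 1 σ.toFinset).symm
      rw [htf, Finset.prod_insert h1σ]
      have hc1 : π.count 1 = q := by
        rw [← hπ, Multiset.count_add, hρ, Multiset.count_replicate_self,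
          Multiset.count_eq_zero_of_notMem (by
            intro h; have := hσ2 1 h; omega)]
        omega
      rw [hc1]
      apply Nat.mul_le_mul_left
      calc (σ.toFinset.prod fun k => Nat.factorial (π.count k))
          = (σ.toFinset.prod fun k => Nat.factorial (σ.count k)) :=
            Finset.prod_congr rfl (fun k hk => by rw [hcountσ k hk])
        _ ≤ Nat.factorial m := hprodσ
  have hmapprod : (π.map Xi).prod = (σ.map Xi).prod := by
    rw [← hπ, Multiset.map_add, Multiset.prod_add, hρ, Multiset.map_replicate]
    norm_num [Xi]
  have hcard : Multiset.card π = m + q := by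
    rw [← hπ, Multiset.card_add]
  -- core inequality
  have hcoreapp := core σ hσne hσ2 q
  have hqS : q + S = N := by omega
  rw [hqS] at hcoreapp
  have hAN : Atab N ≤ 190 := Atab_final N hN
  set P := (σ.map Xi).prod with hPdef
  have hstrict : Nat.factorial q * Nat.factorial m * P * 3 ^ m
      < Nat.factorial N * 3 ^ S := by
    have h1 : 320 * (Nat.factorial q * Nat.factorial m * P * 3 ^ m)
        ≤ 190 * (Nat.factorial N * 3 ^ S) := by
      calc 320 * (Nat.factorial q * Nat.factorial m * P * 3 ^ m)
          = 320 * Nat.factorial m * P * 3 ^ m * Nat.factorial q := by ring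
        _ ≤ Atab N * Nat.factorial N * 3 ^ S := hcoreapp
        _ = Atab N * (Nat.factorial N * 3 ^ S) := by ring
        _ ≤ 190 * (Nat.factorial N * 3 ^ S) := Nat.mul_le_mul_right _ hAN
    have hpos2 : 0 < Nat.factorial N * 3 ^ S := by positivity
    by_contra h'
    push_neg at h'
    set z := Nat.factorial N * 3 ^ S
    set w := Nat.factorial q * Nat.factorial m * P * 3 ^ m
    omega
  have hmleS : m ≤ S := by
    have h := Multiset.card_nsmul_le_sum hσ2
    rw [smul_eq_mul] at h
    omega
  have hswap : 3 ^ S * d ^ m ≤ 3 ^ m * d ^ S := pow_swap d m S hd hmleS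
  have hfinal : (Nat.factorial q * Nat.factorial m * P) * d ^ (m + q)
      < Nat.factorial N * d ^ N := by
    have hstep1 : ((Nat.factorial q * Nat.factorial m * P) * d ^ (m + q)) * 3 ^ S
        ≤ ((Nat.factorial q * Nat.factorial m * P * 3 ^ m)) * (d ^ q * d ^ S) := by
      calc ((Nat.factorial q * Nat.factorial m * P) * d ^ (m + q)) * 3 ^ S
          = (Nat.factorial q * Nat.factorial m * P) * d ^ q * (3 ^ S * d ^ m) := by
            rw [pow_add]; ring
        _ ≤ (Nat.factorial q * Nat.factorial m * P) * d ^ q * (3 ^ m * d ^ S) :=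
            Nat.mul_le_mul_left _ hswap
        _ = (Nat.factorial q * Nat.factorial m * P * 3 ^ m) * (d ^ q * d ^ S) := by ring
    have hstep2 : (Nat.factorial q * Nat.factorial m * P * 3 ^ m) * (d ^ q * d ^ S)
        < (Nat.factorial N * 3 ^ S) * (d ^ q * d ^ S) := by
      apply mul_lt_mul_of_pos_right hstrict
      positivity
    have hstep3 : (Nat.factorial N * 3 ^ S) * (d ^ q * d ^ S)
        = (Nat.factorial N * d ^ N) * 3 ^ S := by
      rw [← hqS, pow_add]; ring
    have hlt : ((Nat.factorial q * Nat.factorial m * P) * d ^ (m + q)) * 3 ^ S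
        < (Nat.factorial N * d ^ N) * 3 ^ S :=
      lt_of_le_of_lt hstep1 (hstep3 ▸ hstep2)
    exact lt_of_mul_lt_mul_right hlt (Nat.zero_le _)
  have hB : Bpart π d ≤ (Nat.factorial q * Nat.factorial m * P) * d ^ (m + q) := by
    unfold Bpart
    rw [hmapprod, hcard]
    exact Nat.mul_le_mul_right _ (Nat.mul_le_mul_right _ hprodbound)
  rw [hrep]
  exact lt_of_le_of_lt hB hfinal
end

section
/- Let n ≥ 1 and d > 1 be integers and let f be a smooth homogeneous polynomial of degree d in the n+2 variables x_0,…,x_{n+1} over ℂ. Then for every subset S of the variable indices {0,…,n+1} with |S| < (n+2)/2, there exists a monomial occurring with nonzero coefficient in f that involves none of the variables x_j with j ∈ S. -/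
open MvPolynomial
set_option linter.unusedSectionVars false
set_option maxHeartbeats 1000000

section Aux
variable {σ ι : Type*} [Fintype σ] [Fintype ι] [DecidableEq σ] [DecidableEq ι]
  [DecidableEq (MvPolynomial σ ℂ)]


lemma degree_add' (a b : σ →₀ ℕ) : (a + b).degree = a.degree + b.degree := by
  simp [Finsupp.degree_eq_weight_one, map_add]

lemma degree_single' (j : σ) (c : ℕ) : (Finsupp.single j c).degree = c := by
  simp [Finsupp.degree_eq_weight_one, Finsupp.weight_apply, Finsupp.sum_single_index]

lemma degree_le_sum (μ : σ →₀ ℕ) : μ.degree ≤ ∑ j : σ, μ j := by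
  unfold Finsupp.degree
  exact Finset.sum_le_sum_of_subset (Finset.subset_univ _)

lemma homogComp_mul {e N : ℕ} (heN : e ≤ N) (g c : MvPolynomial σ ℂ)
    (hg : g.IsHomogeneous e) :
    homogeneousComponent N (c * g) = homogeneousComponent (N - e) c * g := by
  have h1 : ∀ i, homogeneousComponent N (homogeneousComponent i c * g)
      = if i = N - e then homogeneousComponent i c * g else 0 := by
    intro i
    rw [homogeneousComponent_of_mem (by
      rw [mem_homogeneousSubmodule]
      exact (homogeneousComponent_isHomogeneous i c).mul hg)]
    by_cases h : i = N - e
    · rw [if_pos (by omega), if_pos h]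
    · rw [if_neg (by omega), if_neg h]
  calc homogeneousComponent N (c * g)
      = ∑ i ∈ Finset.range (c.totalDegree + 1),
          homogeneousComponent N (homogeneousComponent i c * g) := by
        rw [← map_sum, ← Finset.sum_mul, sum_homogeneousComponent]
    _ = ∑ i ∈ Finset.range (c.totalDegree + 1),
          if i = N - e then homogeneousComponent i c * g else 0 :=
        Finset.sum_congr rfl fun i _ => h1 i
    _ = if N - e ∈ Finset.range (c.totalDegree + 1)
          then homogeneousComponent (N - e) c * g else 0 := Finset.sum_ite_eq' _ _ _
    _ = homogeneousComponent (N - e) c * g := by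
        split_ifs with h
        · rfl
        · rw [homogeneousComponent_eq_zero, zero_mul]
          simp only [Finset.mem_range] at h
          omega

noncomputable def monBox (c : ℕ) : Finset (σ →₀ ℕ) :=
  (Fintype.piFinset fun _ : σ => Finset.range (c + 1)).image Finsupp.equivFunOnFinite.symm

lemma mem_monBox {c : ℕ} {μ : σ →₀ ℕ} (h : ∀ j, μ j ≤ c) : μ ∈ monBox c := by
  refine Finset.mem_image.mpr ⟨⇑μ, ?_, Finsupp.equivFunOnFinite_symm_coe μ⟩
  simp only [Fintype.mem_piFinset, Finset.mem_range]
  exact fun j => Nat.lt_succ_of_le (h j)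

lemma monBox_card (c : ℕ) : (monBox (σ := σ) c).card = (c + 1) ^ (Fintype.card σ) := by
  rw [monBox, Finset.card_image_of_injective _ (Equiv.injective _)]
  simp

noncomputable def spanSet (g : ι → MvPolynomial σ ℂ) (Cb D : ℕ) : Finset (MvPolynomial σ ℂ) :=
  ((Fintype.piFinset fun _ : ι => Finset.range (D + 1)) ×ˢ monBox Cb).image
    (fun p => (∏ i, g i ^ p.1 i) * monomial p.2 1)

lemma spanSet_mono (g : ι → MvPolynomial σ ℂ) (Cb : ℕ) {D₁ D₂ : ℕ} (h : D₁ ≤ D₂) :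
    spanSet g Cb D₁ ⊆ spanSet g Cb D₂ := by
  apply Finset.image_subset_image
  apply Finset.product_subset_product _ le_rfl
  intro a ha
  simp only [Fintype.mem_piFinset, Finset.mem_range] at ha ⊢
  exact fun i => lt_of_lt_of_le (ha i) (by omega)

lemma spanSet_card_le (g : ι → MvPolynomial σ ℂ) (Cb D : ℕ) :
    (spanSet g Cb D).card ≤ (D + 1) ^ (Fintype.card ι) * (Cb + 1) ^ (Fintype.card σ) := by
  refine (Finset.card_image_le).trans ?_
  rw [Finset.card_product, monBox_card]
  gcongr
  · simp

lemma prod_update_succ (g : ι → MvPolynomial σ ℂ) (a : ι → ℕ) (i : ι) :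
    (∏ l, g l ^ (Function.update a i (a i + 1)) l) = g i * ∏ l, g l ^ a l := by
  have h1 : (fun l => g l ^ (Function.update a i (a i + 1)) l)
      = Function.update (fun l => g l ^ a l) i (g i ^ (a i + 1)) := by
    funext l
    by_cases h : l = i
    · subst h; simp
    · simp [Function.update_of_ne h]
  rw [h1, Finset.prod_update_of_mem (Finset.mem_univ i),
    Finset.prod_eq_mul_prod_sdiff_singleton_of_mem (Finset.mem_univ i) (fun l => g l ^ a l),
    pow_succ, mul_assoc, mul_comm (g i), ← mul_assoc]
  ring

lemma mul_mem_span (g : ι → MvPolynomial σ ℂ) (e : ι → ℕ) (Cb : ℕ)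
    (he : ∀ i, 1 ≤ e i) (i : ι) {D' D : ℕ} (hD : D' + e i ≤ D)
    {p : MvPolynomial σ ℂ}
    (hp : p ∈ Submodule.span ℂ ((spanSet g Cb D' : Finset _) : Set (MvPolynomial σ ℂ))) :
    g i * p ∈ Submodule.span ℂ ((spanSet g Cb D : Finset _) : Set (MvPolynomial σ ℂ)) := by
  induction hp using Submodule.span_induction with
  | mem x hx =>
    apply Submodule.subset_span
    obtain ⟨⟨a, ν⟩, hmem, rfl⟩ := Finset.mem_image.mp hx
    obtain ⟨ha, hν⟩ := Finset.mem_product.mp hmem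
    refine Finset.mem_image.mpr ⟨⟨Function.update a i (a i + 1), ν⟩, ?_, ?_⟩
    · refine Finset.mem_product.mpr ⟨?_, hν⟩
      simp only [Fintype.mem_piFinset, Finset.mem_range] at ha ⊢
      intro l
      by_cases h : l = i
      · subst h; simp only [Function.update_self]
        have h2 := ha l; have h3 := he l; omega
      · rw [Function.update_of_ne h]; have := ha l; omega
    · simp only [prod_update_succ]; ring
  | zero => rw [mul_zero]; exact Submodule.zero_mem _
  | add x y _ _ hx hy => rw [mul_add]; exact Submodule.add_mem _ hx hy
  | smul c x _ hx => rw [mul_smul_comm]; exact Submodule.smul_mem _ _ hx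

lemma degree_of_mem_support_homog {p : MvPolynomial σ ℂ} {n : ℕ} (hp : p.IsHomogeneous n)
    {ν : σ →₀ ℕ} (hν : ν ∈ p.support) : ν.degree = n := by
  by_contra h
  exact (MvPolynomial.mem_support_iff.mp hν) (hp.coeff_eq_zero h)
end Aux

section Aux2
variable {σ ι : Type*} [Fintype σ] [Fintype ι] [DecidableEq σ] [DecidableEq ι]
  [DecidableEq (MvPolynomial σ ℂ)]

lemma monomial_mem_span
    (g : ι → MvPolynomial σ ℂ) (e : ι → ℕ) (N : ℕ)
    (hσ : 1 ≤ Fintype.card σ)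
    (hg : ∀ i, (g i).IsHomogeneous (e i)) (he : ∀ i, 1 ≤ e i)
    (heN : ∀ i, e i ≤ N) (hN : 1 ≤ N)
    (hX : ∀ j : σ, ∃ b : ι → MvPolynomial σ ℂ,
      (∀ i, (b i).IsHomogeneous (N - e i)) ∧ X j ^ N = ∑ i, b i * g i) :
    ∀ D (μ : σ →₀ ℕ), μ.degree ≤ D →
      (monomial μ (1:ℂ)) ∈ Submodule.span ℂ
        ((spanSet g (Fintype.card σ * (N - 1)) D : Finset _) : Set (MvPolynomial σ ℂ)) := by
  intro D
  induction D using Nat.strong_induction_on with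
  | _ D IH =>
  intro μ hμD
  by_cases hsmall : ∀ j, μ j ≤ N - 1
  · apply Submodule.subset_span
    refine Finset.mem_image.mpr ⟨⟨fun _ => 0, μ⟩, ?_, by simp⟩
    refine Finset.mem_product.mpr ⟨?_, mem_monBox (fun j => ?_)⟩
    · simp only [Fintype.mem_piFinset, Finset.mem_range]; omega
    · calc μ j ≤ N - 1 := hsmall j
        _ ≤ Fintype.card σ * (N - 1) := Nat.le_mul_of_pos_left _ hσ
  · push_neg at hsmall
    obtain ⟨j, hj⟩ := hsmall
    have hjN : N ≤ μ j := by omega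
    have hNdeg : N ≤ μ.degree := le_trans hjN (Finsupp.le_degree j μ)
    set μ' : σ →₀ ℕ := μ - Finsupp.single j N with hμ'
    have hsplit : μ = Finsupp.single j N + μ' := by
      ext l
      by_cases h : l = j
      · subst h
        simp [hμ', Finsupp.tsub_apply, Finsupp.single_apply]
        omega
      · simp [hμ', Finsupp.tsub_apply, Finsupp.single_apply, Ne.symm h, h]
    have hdeg' : μ'.degree = μ.degree - N := by
      have := degree_add' (Finsupp.single j N) μ'
      rw [← hsplit, degree_single'] at this
      omega
    obtain ⟨b, hb, hXb⟩ := hX j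
    rw [hsplit, monomial_single_add, hXb, Finset.sum_mul]
    apply Submodule.sum_mem
    intro i _
    have hterm : b i * g i * monomial μ' 1 = g i * (b i * monomial μ' 1) := by ring
    rw [hterm]
    have hDei : (D - e i) + e i ≤ D := by have := heN i; omega
    apply mul_mem_span g e _ he i hDei
    -- b i * monomial μ' 1 ∈ span (spanSet (D - e i))
    rw [MvPolynomial.as_sum (b i), Finset.sum_mul]
    apply Submodule.sum_mem
    intro ν hν
    rw [monomial_mul, mul_one,
      show (monomial (ν + μ')) (coeff ν (b i)) = coeff ν (b i) • monomial (ν + μ') (1:ℂ) by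
        rw [smul_monomial, smul_eq_mul, mul_one]]
    apply Submodule.smul_mem
    have hνdeg : ν.degree = N - e i := degree_of_mem_support_homog (hb i) hν
    have hlt : D - e i < D := by have := he i; have := heN i; omega
    apply IH _ hlt
    rw [degree_add', hνdeg, hdeg']
    have := heN i
    omega
end Aux2

section Aux3
variable {σ ι : Type*} [Fintype σ] [Fintype ι] [DecidableEq σ] [DecidableEq ι]
  [DecidableEq (MvPolynomial σ ℂ)]

lemma monBox_apply_le {c : ℕ} {μ : σ →₀ ℕ} (h : μ ∈ monBox c) : ∀ j, μ j ≤ c := by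
  obtain ⟨a, ha, rfl⟩ := Finset.mem_image.mp h
  simp only [Fintype.mem_piFinset, Finset.mem_range] at ha
  intro j
  exact Nat.lt_succ_iff.mp (ha j)

/-- Key lemma: fewer homogeneous polynomials of positive degree than variables
have a nontrivial common zero over `ℂ`. -/
lemma exists_common_zero
    (g : ι → MvPolynomial σ ℂ) (e : ι → ℕ)
    (hc : Fintype.card ι < Fintype.card σ)
    (he : ∀ i, 1 ≤ e i) (hg : ∀ i, (g i).IsHomogeneous (e i)) :
    ∃ x : σ → ℂ, x ≠ 0 ∧ ∀ i, eval x (g i) = 0 := by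
  by_contra hcon
  push_neg at hcon
  have hzero : ∀ x : σ → ℂ, (∀ i, eval x (g i) = 0) → x = 0 := by
    intro x hx
    by_contra hxne
    obtain ⟨i, hi⟩ := hcon x hxne
    exact hi (hx i)
  set I : Ideal (MvPolynomial σ ℂ) := Ideal.span (Set.range g) with hI
  have hrad : ∀ j : σ, (X j : MvPolynomial σ ℂ) ∈ I.radical := by
    intro j
    rw [← MvPolynomial.vanishingIdeal_zeroLocus_eq_radical (K := ℂ)]
    intro x hx
    have hx0 : x = 0 := hzero x (fun i => hx (g i) (Ideal.subset_span ⟨i, rfl⟩))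
    rw [hx0, aeval_X]
    rfl
  have hpow : ∀ j : σ, ∃ n : ℕ, (X j : MvPolynomial σ ℂ) ^ n ∈ I := fun j => hrad j
  choose nf hnf using hpow
  set N : ℕ := Finset.univ.sup nf + Finset.univ.sup e + 1 with hNdef
  have hN1 : 1 ≤ N := by omega
  have heN : ∀ i, e i ≤ N := by
    intro i
    have := Finset.le_sup (f := e) (Finset.mem_univ i)
    omega
  have hXN : ∀ j : σ, (X j : MvPolynomial σ ℂ) ^ N ∈ I := by
    intro j
    have h1 : nf j ≤ N := by
      have := Finset.le_sup (f := nf) (Finset.mem_univ j)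
      omega
    have h2 : (X j : MvPolynomial σ ℂ) ^ N = X j ^ (N - nf j) * X j ^ nf j := by
      rw [← pow_add]
      congr 1
      omega
    rw [h2]
    exact Ideal.mul_mem_left _ _ (hnf j)
  have hXrep : ∀ j : σ, ∃ b : ι → MvPolynomial σ ℂ,
      (∀ i, (b i).IsHomogeneous (N - e i)) ∧ (X j : MvPolynomial σ ℂ) ^ N = ∑ i, b i * g i := by
    intro j
    obtain ⟨c, hcc⟩ := Ideal.mem_span_range_iff_exists_fun.mp (hXN j)
    refine ⟨fun i => homogeneousComponent (N - e i) (c i),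
      fun i => homogeneousComponent_isHomogeneous _ _, ?_⟩
    calc (X j : MvPolynomial σ ℂ) ^ N
        = homogeneousComponent N ((X j : MvPolynomial σ ℂ) ^ N) := by
          rw [homogeneousComponent_of_mem (by
            rw [mem_homogeneousSubmodule]; exact isHomogeneous_X_pow j N), if_pos rfl]
      _ = homogeneousComponent N (∑ i, c i * g i) := by rw [hcc]
      _ = ∑ i, homogeneousComponent N (c i * g i) := map_sum _ _ _
      _ = ∑ i, homogeneousComponent (N - e i) (c i) * g i :=
          Finset.sum_congr rfl fun i _ => homogComp_mul (heN i) (g i) (c i) (hg i)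
  -- counting contradiction
  set m : ℕ := Fintype.card σ with hm
  set k : ℕ := Fintype.card ι with hk
  have hm1 : 1 ≤ m := by omega
  set Cb : ℕ := m * (N - 1) with hCbdef
  set Q : ℕ := Cb + 1 with hQdef
  set t : ℕ := m ^ k * Q ^ m with htdef
  set D : ℕ := m * t with hDdef
  have hspan := monomial_mem_span g e N hm1 hg he heN hN1 hXrep D
  -- the independent monomials
  set v : {μ // μ ∈ monBox (σ := σ) t} → MvPolynomial σ ℂ := fun μ => monomial μ.1 1 with hv
  have hvind : LinearIndependent ℂ v := by
    have hb := (basisMonomials σ ℂ).linearIndependent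
    have hveq : v = ⇑(basisMonomials σ ℂ) ∘ (Subtype.val) := by
      funext μ
      rw [coe_basisMonomials]
      rfl
    rw [hveq]
    exact hb.comp _ Subtype.val_injective
  have hrange : Set.range v ≤ Submodule.span ℂ ((spanSet g Cb D : Finset _) : Set (MvPolynomial σ ℂ)) := by
    rintro p ⟨μ, rfl⟩
    apply hspan
    calc (μ.1).degree ≤ ∑ j : σ, μ.1 j := degree_le_sum _
      _ ≤ ∑ _j : σ, t := Finset.sum_le_sum fun j _ => monBox_apply_le μ.2 j
      _ = m * t := by rw [Finset.sum_const, smul_eq_mul, Finset.card_univ]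
  have hcard := linearIndependent_le_span' v hvind _ hrange
  rw [Cardinal.mk_fintype] at hcard
  have hcard2 : (monBox (σ := σ) t).card ≤ (spanSet g Cb D).card := by
    have := Nat.cast_le (α := Cardinal).mp hcard
    simpa only [Fintype.card_coe, Finset.coe_sort_coe] using this
  rw [monBox_card] at hcard2
  have hcard3 : (t + 1) ^ m ≤ (D + 1) ^ k * Q ^ m :=
    le_trans hcard2 (by simpa only [hQdef] using spanSet_card_le g Cb D)
  -- numeric contradiction
  have hQ1 : 1 ≤ Q := by omega
  have ht1 : 1 ≤ t := by
    rw [htdef]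
    exact Nat.mul_pos (pow_pos hm1 k) (pow_pos (by omega) m)
  have h2 : (D + 1) ^ k ≤ (m * (t + 1)) ^ k := Nat.pow_le_pow_left (by rw [hDdef]; nlinarith) k
  have h3 : (t + 1) ^ m ≤ (t + 1) ^ k * t := by
    calc (t + 1) ^ m ≤ (m * (t + 1)) ^ k * Q ^ m := le_trans hcard3 (Nat.mul_le_mul_right _ h2)
      _ = (t + 1) ^ k * (m ^ k * Q ^ m) := by rw [mul_pow]; ring
      _ = (t + 1) ^ k * t := by rw [htdef]
  have h4 : (t + 1) ^ k * t < (t + 1) ^ (k + 1) := by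
    rw [pow_succ]
    have hp : 0 < (t + 1) ^ k := pow_pos (by omega) k
    nlinarith
  have h5 : (t + 1) ^ (k + 1) ≤ (t + 1) ^ m := Nat.pow_le_pow_right (by omega) (by omega)
  omega
end Aux3

theorem stmt_19 (n d : ℕ) (hn : 1 ≤ n) (hd : 1 < d)
    (f : MvPolynomial (Fin (n+2)) ℂ) (hf : IsSmoothHypersurface d f)
    (S : Finset (Fin (n+2))) (hS : 2 * S.card < n + 2) :
    ∃ mono ∈ f.support, ∀ j ∈ S, mono j = 0 := by
  classical
  by_contra hcon
  push_neg at hcon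
  -- hcon : ∀ mono ∈ f.support, ∃ j ∈ S, mono j ≠ 0
  obtain ⟨hfhom, hfsmooth⟩ := hf
  -- homogeneity of the partial derivatives
  have hpd : ∀ i : Fin (n+2), (pderiv i f).IsHomogeneous (d - 1) := by
    intro i
    have hrw : pderiv i f
        = ∑ μ ∈ f.support, monomial (μ - Finsupp.single i 1) (coeff μ f * μ i) := by
      conv_lhs => rw [MvPolynomial.as_sum f]
      rw [map_sum]
      exact Finset.sum_congr rfl fun μ _ => pderiv_monomial
    rw [hrw]
    apply IsHomogeneous.sum
    intro μ hμ
    by_cases hμi : μ i = 0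
    · rw [hμi]
      norm_num
      exact isHomogeneous_zero _ _ _
    · apply isHomogeneous_monomial
      have hdμ : μ.degree = d := degree_of_mem_support_homog hfhom hμ
      have hsplit : μ = Finsupp.single i 1 + (μ - Finsupp.single i 1) := by
        ext l
        by_cases h : l = i
        · subst h
          simp [Finsupp.tsub_apply, Finsupp.single_apply]
          omega
        · simp [Finsupp.tsub_apply, Finsupp.single_apply, Ne.symm h, h]
      have hda := degree_add' (Finsupp.single i 1) (μ - Finsupp.single i 1)
      rw [← hsplit, degree_single'] at hda
      omega
  -- restriction to the variables not in S
  let u : Fin (n+2) → MvPolynomial {j : Fin (n+2) // j ∉ S} ℂ :=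
    fun j => if h : j ∈ S then 0 else X ⟨j, h⟩
  let g : {j : Fin (n+2) // j ∈ S} → MvPolynomial {j : Fin (n+2) // j ∉ S} ℂ :=
    fun i => aeval u (pderiv i.1 f)
  have hu : ∀ j, (u j).IsHomogeneous 1 := by
    intro j
    by_cases h : j ∈ S
    · rw [show u j = 0 by simp only [u, dif_pos h]]
      exact isHomogeneous_zero _ _ _
    · rw [show u j = X ⟨j, h⟩ by simp only [u, dif_neg h]]
      exact isHomogeneous_X _ _
  have hghom : ∀ i, (g i).IsHomogeneous (d - 1) := by
    intro i
    have := (hpd i.1).aeval u hu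
    rwa [one_mul] at this
  have hcards : Fintype.card {j : Fin (n+2) // j ∈ S} < Fintype.card {j : Fin (n+2) // j ∉ S} := by
    have h1 : Fintype.card {j : Fin (n+2) // j ∈ S} = S.card := by
      simp [Fintype.card_subtype]
    have h2 : Fintype.card {j : Fin (n+2) // j ∉ S} = (n+2) - S.card := by
      rw [Fintype.card_subtype_compl, h1, Fintype.card_fin]
    rw [h1, h2]
    omega
  obtain ⟨x, hx0, hxz⟩ := exists_common_zero g (fun _ => d - 1) hcards
    (fun _ => by show 1 ≤ d - 1; omega) hghom
  let y : Fin (n+2) → ℂ := fun j => if h : j ∈ S then 0 else x ⟨j, h⟩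
  have hkey : ∀ p : MvPolynomial (Fin (n+2)) ℂ, eval x (aeval u p) = eval y p := by
    intro p
    induction p using MvPolynomial.induction_on with
    | C a => simp
    | add p q hp hq => simp only [map_add, hp, hq]
    | mul_X p i hp =>
      rw [map_mul, map_mul, hp]
      congr 1
      by_cases h : i ∈ S
      · simp [u, y, dif_pos h]
      · simp [u, y, dif_neg h]
  have hzero : ∀ i, eval y (pderiv i f) = 0 := by
    intro i
    by_cases hiS : i ∈ S
    · rw [← hkey]
      exact hxz ⟨i, hiS⟩
    · have hrw : pderiv i f
          = ∑ μ ∈ f.support, monomial (μ - Finsupp.single i 1) (coeff μ f * μ i) := by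
        conv_lhs => rw [MvPolynomial.as_sum f]
        rw [map_sum]
        exact Finset.sum_congr rfl fun μ _ => pderiv_monomial
      rw [hrw, map_sum]
      apply Finset.sum_eq_zero
      intro μ hμ
      by_cases hμi : μ i = 0
      · rw [hμi]
        norm_num
      · obtain ⟨j₀, hj₀S, hj₀⟩ := hcon μ hμ
        have hij₀ : i ≠ j₀ := fun h => hiS (h ▸ hj₀S)
        have hsupp : (μ - Finsupp.single i 1 : Fin (n+2) →₀ ℕ) j₀ ≠ 0 := by
          rw [Finsupp.tsub_apply, Finsupp.single_apply, if_neg hij₀]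
          omega
        rw [eval_monomial]
        apply mul_eq_zero_of_right
        apply Finset.prod_eq_zero (Finsupp.mem_support_iff.mpr hsupp)
        show y j₀ ^ ((μ - Finsupp.single i 1 : Fin (n+2) →₀ ℕ) j₀) = 0
        rw [show y j₀ = 0 by simp only [y]; rw [dif_pos hj₀S]]
        exact zero_pow hsupp
  have hy0 : y = 0 := hfsmooth y hzero
  obtain ⟨j₀, hj₀⟩ := Function.ne_iff.mp hx0
  apply hj₀
  have : y j₀.1 = x j₀ := by simp only [y, dif_neg j₀.2]
  rw [← this, hy0]
  rfl
end
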